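/- Let P and Q be coprime polynomials with integer coefficients of degrees at most m and n respectively, and let ξ be a real number with ξ·P(ξ)·Q(ξ) ≠ 0. Then there is a constant c > 0 depending only on m, n, ξ such that max{|P(ξ)|, |Q(ξ)|} ≥ c·H(P)^{-(n-1)}·H(Q)^{-(m-1)}·min{H(P)^{-1}, H(Q)^{-1}}. -/

import Mathlib

open Polynomial Filter

/-- Height of an integer polynomial: the maximum absolute value of its coefficients. -/
noncomputable def polyHeight (P : Polynomial ℤ) : ℝ :=
  ((P.support.sup fun i => (P.coeff i).natAbs : ℕ) : ℝ)

/-- `P` and `Q` have no common non-constant factor in `ℤ[X]`. -/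
def CoprimePoly (P Q : Polynomial ℤ) : Prop :=
  ∀ d : Polynomial ℤ, d ∣ P → d ∣ Q → d.natDegree = 0

/-- The exponent `w_n(ξ)`. -/
noncomputable def wExp (n : ℕ) (ξ : ℝ) : EReal :=
  sSup {x : EReal | ∃ w : ℝ, x = (w : EReal) ∧
    {P : Polynomial ℤ | P.natDegree ≤ n ∧ 0 < |Polynomial.aeval ξ P| ∧
      |Polynomial.aeval ξ P| ≤ (polyHeight P) ^ (-w)}.Infinite}

/-- The uniform exponent `ŵ_n(ξ)`. -/
noncomputable def whExp (n : ℕ) (ξ : ℝ) : EReal :=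
  sSup {x : EReal | ∃ w : ℝ, x = (w : EReal) ∧
    ∀ᶠ H : ℝ in atTop, ∃ P : Polynomial ℤ, P.natDegree ≤ n ∧ polyHeight P ≤ H ∧
      0 < |Polynomial.aeval ξ P| ∧ |Polynomial.aeval ξ P| ≤ H ^ (-w)}

/-- The exponent `w*_n(ξ)` of approximation by algebraic numbers of degree at most `n`;
the height of an algebraic number is the height of its irreducible defining polynomial. -/
noncomputable def wStarExp (n : ℕ) (ξ : ℝ) : EReal :=
  sSup {x : EReal | ∃ w : ℝ, x = (w : EReal) ∧
    {α : ℝ | ∃ P : Polynomial ℤ, Irreducible P ∧ Polynomial.aeval α P = 0 ∧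
      P.natDegree ≤ n ∧ 0 < |ξ - α| ∧ |ξ - α| ≤ (polyHeight P) ^ (-w - 1)}.Infinite}

/-- The uniform exponent `ŵ*_n(ξ)`. -/
noncomputable def whStarExp (n : ℕ) (ξ : ℝ) : EReal :=
  sSup {x : EReal | ∃ w : ℝ, x = (w : EReal) ∧
    ∀ᶠ H : ℝ in atTop, ∃ α : ℝ, ∃ P : Polynomial ℤ, Irreducible P ∧
      Polynomial.aeval α P = 0 ∧ P.natDegree ≤ n ∧ polyHeight P ≤ H ∧
      0 < |ξ - α| ∧ |ξ - α| ≤ (polyHeight P)⁻¹ * H ^ (-w)}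

/-!
Since `P` and `Q` are coprime, their resultant is a nonzero integer, so `1 ≤ |Res(P, Q)|`.
Adding `ξ ^ i` times row `i` of the Sylvester matrix to row `0` does not change its determinant
and turns that row into the values `ξ ^ j Q(ξ)`, `ξ ^ j P(ξ)`, all bounded by
`max(1, |ξ|) ^ (m + n) max(|P(ξ)|, |Q(ξ)|)`; the remaining entries of the `Q`- and `P`-columns
are bounded by `H(Q)` and `H(P)`. Expanding the determinant over permutations gives
`min(H(P), H(Q)) ≤ (m + n)! max(1, |ξ|) ^ (m + n) H(P) ^ n H(Q) ^ m max(|P(ξ)|, |Q(ξ)|)`.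
-/

open Polynomial

lemma polyHeight_nonneg (P : ℤ[X]) : 0 ≤ polyHeight P := Nat.cast_nonneg _

lemma abs_coeff_le_polyHeight (P : ℤ[X]) (i : ℕ) : |(P.coeff i : ℝ)| ≤ polyHeight P := by
  rcases eq_or_ne (P.coeff i) 0 with h | h
  · simp [h, polyHeight_nonneg]
  · rw [← Int.cast_abs, Int.abs_eq_natAbs, Int.cast_natCast, polyHeight]
    exact_mod_cast Finset.le_sup (f := fun i => (P.coeff i).natAbs) (mem_support_iff.mpr h)

lemma one_le_polyHeight {P : ℤ[X]} (hP : P ≠ 0) : 1 ≤ polyHeight P := by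
  have h := abs_coeff_le_polyHeight P P.natDegree
  rw [coeff_natDegree] at h
  exact le_trans (by exact_mod_cast Int.one_le_abs (leadingCoeff_ne_zero.mpr hP)) h

lemma polyHeight_eq_abs_aeval_of_natDegree_eq_zero {P : ℤ[X]} (hP : P.natDegree = 0) (ξ : ℝ) :
    polyHeight P = |aeval ξ P| := by
  rw [eq_C_of_natDegree_eq_zero hP]
  rcases eq_or_ne (P.coeff 0) 0 with h | h
  · simp [h, polyHeight]
  · rw [polyHeight, support_C h]
    simp [Nat.cast_natAbs]

namespace Polynomial

variable {R : Type*}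

noncomputable def sylvesterColumn [Semiring R] (f g : R[X]) (m n : ℕ) : Fin (m + n) → R[X] :=
  Fin.addCases (fun j => g * X ^ (j : ℕ)) (fun j => f * X ^ (j : ℕ))

variable {m n : ℕ}

lemma sylvester_apply_eq_coeff_sylvesterColumn [Semiring R] {f g : R[X]} (hf : f.natDegree ≤ m)
    (hg : g.natDegree ≤ n) (i j : Fin (m + n)) :
    sylvester f g m n i j = (sylvesterColumn f g m n j).coeff i := by
  induction j using Fin.addCases with
  | left j =>
    simp only [sylvester, sylvesterColumn, Matrix.of_apply, Fin.addCases_left, Set.mem_Icc,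
      coeff_mul_X_pow']
    split_ifs <;> first | rfl | omega | exact (coeff_eq_zero_of_natDegree_lt (by omega)).symm
  | right j =>
    simp only [sylvester, sylvesterColumn, Matrix.of_apply, Fin.addCases_right, Set.mem_Icc,
      coeff_mul_X_pow']
    split_ifs <;> first | rfl | omega | exact (coeff_eq_zero_of_natDegree_lt (by omega)).symm

lemma natDegree_sylvesterColumn_lt [Semiring R] {f g : R[X]} (hf : f.natDegree ≤ m)
    (hg : g.natDegree ≤ n) (j : Fin (m + n)) :
    (sylvesterColumn f g m n j).natDegree < m + n := by
  induction j using Fin.addCases with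
  | left j =>
    simp only [sylvesterColumn, Fin.addCases_left]
    exact natDegree_mul_le.trans_lt (by have := natDegree_X_pow_le (R := R) (j : ℕ); omega)
  | right j =>
    simp only [sylvesterColumn, Fin.addCases_right]
    exact natDegree_mul_le.trans_lt (by have := natDegree_X_pow_le (R := R) (j : ℕ); omega)

/-- Obtained by adding `ξ ^ i` times row `i` to row `0` for every `i > 0`. -/
lemma algebraMap_resultant_eq_det_updateRow [CommRing R] {A : Type*} [CommRing A] [Algebra R A]
    {f g : R[X]} (hf : f.natDegree ≤ m) (hg : g.natDegree ≤ n) (ξ : A) (i₀ : Fin (m + n))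
    (hi₀ : (i₀ : ℕ) = 0) :
    algebraMap R A (resultant f g m n) = (((sylvester f g m n).map (algebraMap R A)).updateRow i₀
      fun j => aeval ξ (sylvesterColumn f g m n j)).det := by
  have hrow : (fun j => aeval ξ (sylvesterColumn f g m n j)) =
      ∑ i : Fin (m + n), ξ ^ (i : ℕ) • (sylvester f g m n).map (algebraMap R A) i := by
    ext j
    rw [aeval_eq_sum_range' (natDegree_sylvesterColumn_lt hf hg j), ← Fin.sum_univ_eq_sum_range]
    simp [sylvester_apply_eq_coeff_sylvesterColumn hf hg, Algebra.smul_def, mul_comm]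
  rw [hrow, Matrix.det_updateRow_sum, hi₀, pow_zero, one_smul, resultant, RingHom.map_det]
  rfl

end Polynomial

theorem Matrix.abs_det_le_of_abs_le_mul {R ι : Type*} [CommRing R] [LinearOrder R]
    [IsStrictOrderedRing R] [Fintype ι] [DecidableEq ι] (M : Matrix ι ι R) (a b : ι → R)
    (h : ∀ i j, |M i j| ≤ a i * b j) :
    |M.det| ≤ (Fintype.card ι).factorial * (∏ i, a i) * ∏ j, b j := by
  calc |M.det| ≤ ∑ σ : Equiv.Perm ι, |Equiv.Perm.sign σ • ∏ j, M (σ j) j| :=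
        M.det_apply ▸ Finset.abs_sum_le_sum_abs _ _
    _ ≤ ∑ σ : Equiv.Perm ι, (∏ i, a i) * ∏ j, b j := by
        refine Finset.sum_le_sum fun σ _ => ?_
        rw [Units.smul_def, zsmul_eq_mul, abs_mul, abs_unit_intCast, one_mul, Finset.abs_prod,
          ← Equiv.prod_comp σ a, ← Finset.prod_mul_distrib]
        exact Finset.prod_le_prod (fun _ _ => abs_nonneg _) fun j _ => h _ _
    _ = _ := by simp [Finset.card_univ, Fintype.card_perm, mul_assoc]

lemma CoprimePoly.eq_zero_of_mul_add_mul_eq_zero {P Q p q : ℤ[X]} (hco : CoprimePoly P Q)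
    (hp : p.degree < P.natDegree) (h : P * q + Q * p = 0) : p = 0 := by
  have hrel : IsRelPrime P.primPart Q := fun d hdP hdQ => by
    obtain ⟨a, rfl⟩ := natDegree_eq_zero.mp (hco d (hdP.trans P.primPart_dvd) hdQ)
    exact isUnit_C.mpr (P.isPrimitive_primPart a hdP)
  have hdvd : P.primPart ∣ p :=
    hrel.dvd_of_dvd_mul_left (P.primPart_dvd.trans ⟨-q, by linear_combination h⟩)
  by_contra hp0
  have := natDegree_le_of_dvd hdvd hp0
  rw [natDegree_primPart] at this
  exact (natDegree_lt_iff_degree_lt hp0).mpr hp |>.not_ge this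

lemma CoprimePoly.resultant_ne_zero {P Q : ℤ[X]} (hco : CoprimePoly P Q) (hP : P ≠ 0) :
    resultant P Q ≠ 0 := by
  intro h
  obtain ⟨v, hv0, hv⟩ := Matrix.exists_mulVec_eq_zero_iff.mpr h
  let b₁ := ((degreeLT.basis ℤ P.natDegree).prod
    (degreeLT.basis ℤ Q.natDegree)).reindex finSumFinEquiv
  let b₂ := degreeLT.basis ℤ (P.natDegree + Q.natDegree)
  let x := b₁.equivFun.symm v
  have hx : sylvesterMap P Q le_rfl le_rfl x = 0 := by
    have := LinearMap.toMatrix_mulVec_repr b₁ b₂ (sylvesterMap P Q le_rfl le_rfl) x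
    have hrepr : ⇑(b₁.repr x) = v := by
      rw [← b₁.equivFun_apply]
      exact b₁.equivFun.apply_symm_apply v
    rw [toMatrix_sylvesterMap', hrepr, hv] at this
    exact b₂.repr.map_eq_zero_iff.mp (Finsupp.ext (congrFun this.symm))
  have hPQ : P * x.2 + Q * x.1 = 0 := congrArg Subtype.val hx
  have h₁ : (x.1 : ℤ[X]) = 0 := hco.eq_zero_of_mul_add_mul_eq_zero (mem_degreeLT.mp x.1.2) hPQ
  have h₂ : (x.2 : ℤ[X]) = 0 := by simpa [h₁, hP] using hPQ
  apply hv0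
  rw [← b₁.equivFun.apply_symm_apply v]
  change b₁.equivFun x = 0
  rw [show x = 0 from Prod.ext (Subtype.ext h₁) (Subtype.ext h₂), map_zero]

lemma abs_coeff_mul_X_pow_le_polyHeight (P : ℤ[X]) (j i : ℕ) :
    |((P * X ^ j).coeff i : ℝ)| ≤ polyHeight P := by
  rw [coeff_mul_X_pow']
  split_ifs
  · exact abs_coeff_le_polyHeight P _
  · simpa using polyHeight_nonneg P

lemma abs_aeval_mul_X_pow_le (P : ℤ[X]) {j k : ℕ} (hj : j ≤ k) (ξ : ℝ) :
    |aeval ξ (P * X ^ j)| ≤ max 1 |ξ| ^ k * |aeval ξ P| := by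
  rw [map_mul, map_pow, aeval_X, abs_mul, abs_pow, mul_comm]
  gcongr
  exact (pow_le_pow_left₀ (abs_nonneg ξ) (le_max_right 1 |ξ|) j).trans
    (pow_le_pow_right₀ (le_max_left 1 |ξ|) hj)

section sylvesterColumn

variable (P Q : ℤ[X]) {m n : ℕ} (j : Fin (m + n))

lemma abs_coeff_sylvesterColumn_le (i : ℕ) :
    |((sylvesterColumn P Q m n j).coeff i : ℝ)| ≤
      Fin.addCases (fun _ => polyHeight Q) (fun _ => polyHeight P) j := by
  induction j using Fin.addCases with
  | left j => simpa [sylvesterColumn] using abs_coeff_mul_X_pow_le_polyHeight Q j i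
  | right j => simpa [sylvesterColumn] using abs_coeff_mul_X_pow_le_polyHeight P j i

lemma abs_aeval_sylvesterColumn_le (ξ : ℝ) :
    |aeval ξ (sylvesterColumn P Q m n j)| ≤
      max 1 |ξ| ^ (m + n) * max |aeval ξ P| |aeval ξ Q| := by
  induction j using Fin.addCases with
  | left j =>
    simp only [sylvesterColumn, Fin.addCases_left]
    exact (abs_aeval_mul_X_pow_le Q (k := m + n) (by omega) ξ).trans
      (mul_le_mul_of_nonneg_left (le_max_right _ _) (by positivity))
  | right j =>
    simp only [sylvesterColumn, Fin.addCases_right]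
    exact (abs_aeval_mul_X_pow_le P (k := m + n) (by omega) ξ).trans
      (mul_le_mul_of_nonneg_left (le_max_left _ _) (by positivity))

end sylvesterColumn

lemma min_polyHeight_le_of_natDegree_add_pos {P Q : ℤ[X]} (hco : CoprimePoly P Q) (hP : P ≠ 0)
    (hQ : Q ≠ 0) (hk : 0 < P.natDegree + Q.natDegree) (ξ : ℝ) :
    min (polyHeight P) (polyHeight Q) ≤
      (P.natDegree + Q.natDegree).factorial * max 1 |ξ| ^ (P.natDegree + Q.natDegree) *
        polyHeight P ^ Q.natDegree * polyHeight Q ^ P.natDegree *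
        max |aeval ξ P| |aeval ξ Q| := by
  set p := P.natDegree
  set q := Q.natDegree
  set ε := max 1 |ξ| ^ (p + q) * max |aeval ξ P| |aeval ξ Q| / min (polyHeight P) (polyHeight Q)
  have hmin : 0 < min (polyHeight P) (polyHeight Q) :=
    lt_min (one_pos.trans_le (one_le_polyHeight hP)) (one_pos.trans_le (one_le_polyHeight hQ))
  let i₀ : Fin (p + q) := ⟨0, hk⟩
  let b : Fin (p + q) → ℝ := Fin.addCases (fun _ => polyHeight Q) (fun _ => polyHeight P)
  have hb : ∀ j, min (polyHeight P) (polyHeight Q) ≤ b j := by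
    intro j
    induction j using Fin.addCases <;> simp [b]
  have hentry : ∀ i j, |(((sylvester P Q p q).map (algebraMap ℤ ℝ)).updateRow i₀
      (fun j => aeval ξ (sylvesterColumn P Q p q j)) i j)| ≤
        Function.update (1 : Fin (p + q) → ℝ) i₀ ε i * b j := by
    intro i j
    rcases eq_or_ne i i₀ with rfl | hi
    · rw [Matrix.updateRow_self, Function.update_self, div_mul_eq_mul_div, le_div_iff₀ hmin]
      exact mul_le_mul (abs_aeval_sylvesterColumn_le P Q j ξ) (hb j) hmin.le (by positivity)
    · rw [Matrix.updateRow_ne hi, Matrix.map_apply,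
        sylvester_apply_eq_coeff_sylvesterColumn le_rfl le_rfl, Function.update_of_ne hi,
        Pi.one_apply, one_mul, algebraMap_int_eq, eq_intCast]
      exact abs_coeff_sylvesterColumn_le P Q j i
  have hdet := Matrix.abs_det_le_of_abs_le_mul _ _ _ hentry
  rw [← algebraMap_resultant_eq_det_updateRow le_rfl le_rfl ξ i₀ rfl] at hdet
  have hres : (1 : ℝ) ≤ |algebraMap ℤ ℝ (resultant P Q)| := by
    rw [algebraMap_int_eq, eq_intCast]
    exact_mod_cast Int.one_le_abs (hco.resultant_ne_zero hP)
  have hprod : ((Fintype.card (Fin (p + q))).factorial : ℝ) *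
      (∏ i, Function.update (1 : Fin (p + q) → ℝ) i₀ ε i) * ∏ j, b j =
      (p + q).factorial * ε * (polyHeight Q ^ p * polyHeight P ^ q) := by
    simp [Finset.prod_update_of_mem, Fin.prod_univ_add, b]
  have h := hres.trans (hdet.trans_eq hprod)
  rw [mul_div_assoc', div_mul_eq_mul_div, one_le_div hmin] at h
  linarith

theorem min_polyHeight_le {P Q : ℤ[X]} (hco : CoprimePoly P Q) (hP : P ≠ 0) (hQ : Q ≠ 0)
    {m n : ℕ} (hPm : P.natDegree ≤ m) (hQn : Q.natDegree ≤ n) (ξ : ℝ) :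
    min (polyHeight P) (polyHeight Q) ≤ (m + n).factorial * max 1 |ξ| ^ (m + n) *
      polyHeight P ^ n * polyHeight Q ^ m * max |aeval ξ P| |aeval ξ Q| := by
  have hHP := one_le_polyHeight hP
  have hHQ := one_le_polyHeight hQ
  have hsharp : min (polyHeight P) (polyHeight Q) ≤
      (P.natDegree + Q.natDegree).factorial * max 1 |ξ| ^ (P.natDegree + Q.natDegree) *
        polyHeight P ^ Q.natDegree * polyHeight Q ^ P.natDegree *
        max |aeval ξ P| |aeval ξ Q| := by
    rcases Nat.eq_zero_or_pos (P.natDegree + Q.natDegree) with hk | hk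
    · have hP0 : P.natDegree = 0 := by omega
      have hQ0 : Q.natDegree = 0 := by omega
      simp only [hP0, hQ0, add_zero, Nat.factorial_zero, Nat.cast_one, pow_zero, one_mul]
      calc min (polyHeight P) (polyHeight Q) ≤ polyHeight P := min_le_left _ _
        _ = |aeval ξ P| := polyHeight_eq_abs_aeval_of_natDegree_eq_zero hP0 ξ
        _ ≤ max |aeval ξ P| |aeval ξ Q| := le_max_left _ _
    · exact min_polyHeight_le_of_natDegree_add_pos hco hP hQ hk ξ
  refine hsharp.trans ?_
  have hT : 1 ≤ max 1 |ξ| := le_max_left _ _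
  gcongr

lemma rpow_neg_natCast_sub_one {x : ℝ} (hx : 0 < x) (n : ℕ) :
    x ^ (-((n : ℝ) - 1)) = x / x ^ n := by
  rw [neg_sub, Real.rpow_sub hx, Real.rpow_one, Real.rpow_natCast]

lemma min_inv_inv_mul_mul {x y : ℝ} (hx : 0 < x) (hy : 0 < y) :
    min x⁻¹ y⁻¹ * (x * y) = min x y := by
  rw [min_mul_of_nonneg _ _ (by positivity), inv_mul_cancel_left₀ hx.ne',
    mul_comm x y, inv_mul_cancel_left₀ hy.ne', min_comm]

theorem stmt1 (m n : ℕ) (ξ : ℝ) :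
    ∃ c : ℝ, 0 < c ∧ ∀ P Q : Polynomial ℤ,
      P.natDegree ≤ m → Q.natDegree ≤ n → CoprimePoly P Q →
      ξ * Polynomial.aeval ξ P * Polynomial.aeval ξ Q ≠ 0 →
      c * (polyHeight P) ^ (-((n : ℝ) - 1)) * (polyHeight Q) ^ (-((m : ℝ) - 1)) *
          min (polyHeight P)⁻¹ (polyHeight Q)⁻¹ ≤
        max |Polynomial.aeval ξ P| |Polynomial.aeval ξ Q| := by
  refine ⟨((m + n).factorial * max 1 |ξ| ^ (m + n))⁻¹, by positivity, ?_⟩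
  intro P Q hPm hQn hco hξ
  have hP : P ≠ 0 := by rintro rfl; simp at hξ
  have hQ : Q ≠ 0 := by rintro rfl; simp at hξ
  have hHP : 0 < polyHeight P := one_pos.trans_le (one_le_polyHeight hP)
  have hHQ : 0 < polyHeight Q := one_pos.trans_le (one_le_polyHeight hQ)
  calc _ = ((m + n).factorial * max 1 |ξ| ^ (m + n))⁻¹ *
        (min (polyHeight P) (polyHeight Q) / (polyHeight P ^ n * polyHeight Q ^ m)) := by
        rw [rpow_neg_natCast_sub_one hHP, rpow_neg_natCast_sub_one hHQ,
          ← min_inv_inv_mul_mul hHP hHQ]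
        ring
    _ ≤ _ := by
        rw [inv_mul_le_iff₀ (by positivity), div_le_iff₀ (by positivity)]
        linarith [min_polyHeight_le hco hP hQ hPm hQn ξ]
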